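/- arXiv:1905.04643 — 4 statements merged into one kernel-verified Lean document; each statement's English description precedes it below -/
import Mathlib

section
/- Existence part of Berlekamp-Welch: if r ∈ F^n satisfies r_i = P(x_i) for all but at most e indices i, where deg P < k and n ≥ k + e, then there exist polynomials E and Q over F with E monic, deg E ≤ e, deg Q ≤ k + e - 1, and Q(x_i) = r_i · E(x_i) for all i = 1,...,n; moreover Q = P·E. -/
open Polynomial

/-- Existence part of Berlekamp–Welch: if r agrees with P (deg P < k) except in
at most e positions and n ≥ k + e, then there exist a monic error-locator E of
degree ≤ e and Q of degree ≤ k + e - 1 with Q(x_i) = r_i E(x_i) for all i, and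
Q = P·E. -/
theorem berlekamp_welch_exists {F : Type*} [Field F] [DecidableEq F]
    (n k e : ℕ) (hn : k + e ≤ n) (x : Fin n ↪ F) (P : F[X])
    (hP : P.degree < (k : ℕ)) (r : Fin n → F)
    (herr : (Finset.univ.filter fun i : Fin n => r i ≠ P.eval (x i)).card ≤ e) :
    ∃ E Q : F[X], E.Monic ∧ E.degree ≤ (e : ℕ) ∧ Q.degree ≤ ((k + e - 1 : ℕ) : ℕ) ∧
      (∀ i : Fin n, Q.eval (x i) = r i * E.eval (x i)) ∧ Q = P * E := by
  set S := Finset.univ.filter fun i : Fin n => r i ≠ P.eval (x i) with hS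
  set E : F[X] := ∏ i ∈ S, (X - C (x i)) with hE
  have hmonic : E.Monic := monic_prod_of_monic _ _ fun i _ => monic_X_sub_C _
  have hdegE : E.degree ≤ (e : ℕ) := by
    rw [hE, degree_prod]
    calc (∑ i ∈ S, (X - C (x i)).degree) = ∑ i ∈ S, 1 := by
          simp [degree_X_sub_C]
      _ = (S.card : WithBot ℕ) := by simp
      _ ≤ (e : ℕ) := by exact_mod_cast herr
  refine ⟨E, P * E, hmonic, hdegE, ?_, ?_, rfl⟩
  · rcases eq_or_ne P 0 with h0 | h0
    · simp [h0]
    · have hnat : P.natDegree < k := (natDegree_lt_iff_degree_lt h0).mpr hP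
      have hPd : P.degree ≤ ((k - 1 : ℕ) : WithBot ℕ) := by
        rw [degree_eq_natDegree h0]
        exact_mod_cast Nat.cast_le.mpr (Nat.le_sub_one_of_lt hnat)
      calc (P * E).degree ≤ P.degree + E.degree := degree_mul_le _ _
        _ ≤ ((k - 1 : ℕ) : WithBot ℕ) + (e : ℕ) := add_le_add hPd hdegE
        _ = ((k + e - 1 : ℕ) : WithBot ℕ) := by
            rw [← Nat.cast_add]
            congr 1
            omega
  · intro i
    by_cases h : r i = P.eval (x i)
    · rw [eval_mul, h]
    · have hiS : i ∈ S := by simp [hS, h]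
      have : E.eval (x i) = 0 := by
        rw [hE, eval_prod]
        exact Finset.prod_eq_zero hiS (by simp)
      simp [eval_mul, this]
end

section
/- If a polynomial R over a field F has degree ≤ d and vanishes at n > d distinct points of F, then R is the zero polynomial; in particular, for the Berlekamp-Welch argument, the polynomial Q(x) - P(x)E(x), which has degree ≤ k + e - 1 and vanishes at the x_i at all agreement positions (of which there are at least n - e ≥ k + e), is identically zero. -/
open Polynomial

/-- A polynomial of degree ≤ d vanishing at n > d distinct points is zero; in
particular, in the Berlekamp–Welch argument, Q - P·E (degree ≤ k + e - 1,
vanishing at the ≥ n - e ≥ k + e agreement points) is identically zero. -/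
theorem vanishing_poly_zero {F : Type*} [Field F] [DecidableEq F]
    (d m : ℕ) (hdm : d < m) (R : F[X]) (hR : R.degree ≤ (d : ℕ))
    (y : Fin m ↪ F) (hvan : ∀ i : Fin m, R.eval (y i) = 0)
    (n k e : ℕ) (hk : 1 ≤ k) (hn : k + 2 * e ≤ n) (x : Fin n ↪ F) (P Q E : F[X])
    (hP : P.degree < (k : ℕ)) (hEd : E.degree ≤ (e : ℕ))
    (hQd : Q.degree ≤ ((k + e - 1 : ℕ) : ℕ)) (r : Fin n → F)
    (hkey : ∀ i : Fin n, Q.eval (x i) = r i * E.eval (x i))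
    (hagree : n - e ≤ (Finset.univ.filter fun i : Fin n => r i = P.eval (x i)).card) :
    R = 0 ∧ Q - P * E = 0 := by
  constructor
  · apply Polynomial.eq_zero_of_natDegree_lt_card_of_eval_eq_zero R y.injective hvan
    rcases eq_or_ne R 0 with h | h
    · simpa [h, Fintype.card_fin] using Nat.pos_of_ne_zero (by omega)
    · have := Polynomial.natDegree_le_iff_degree_le.mpr hR
      simpa [Fintype.card_fin] using lt_of_le_of_lt this hdm
  · set s : Finset F := (Finset.univ.filter fun i : Fin n => r i = P.eval (x i)).image x
      with hs
    have hscard : n - e ≤ s.card := by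
      rw [hs, Finset.card_image_of_injective _ x.injective]; exact hagree
    apply Polynomial.eq_zero_of_natDegree_lt_card_of_eval_eq_zero' (Q - P * E) s
    · intro a ha
      rw [hs] at ha
      obtain ⟨i, hi, rfl⟩ := Finset.mem_image.mp ha
      have hri : r i = P.eval (x i) := (Finset.mem_filter.mp hi).2
      simp [hkey i, hri, mul_comm]
    · have hPn : P.natDegree ≤ k - 1 := by
        rcases eq_or_ne P 0 with h | h
        · simp [h]
        · have : P.natDegree < k := Polynomial.natDegree_lt_iff_degree_lt h |>.mpr hP
          omega
      have hEn : E.natDegree ≤ e := Polynomial.natDegree_le_iff_degree_le.mpr hEd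
      have hQn : Q.natDegree ≤ k + e - 1 := Polynomial.natDegree_le_iff_degree_le.mpr hQd
      have hPE : (P * E).natDegree ≤ k + e - 1 := by
        calc (P * E).natDegree ≤ P.natDegree + E.natDegree := Polynomial.natDegree_mul_le
        _ ≤ (k - 1) + e := Nat.add_le_add hPn hEn
        _ = k + e - 1 := by omega
      have : (Q - P * E).natDegree ≤ k + e - 1 :=
        le_trans (Polynomial.natDegree_sub_le _ _) (max_le hQn hPE)
      have hlt : k + e - 1 < n - e := by omega
      omega
end

section
/- In the single-error Berlekamp-Welch system for n = 4 parties (degree-2 Q, monic degree-1 error locator x + b_0), if the received word r differs from the codeword of a polynomial P with deg P ≤ 1 in exactly one position x_j = j, then the solution of the 4×4 linear system yields b_0 = -j, i.e., the root of the error locator x + b_0 is the error position. -/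
open Polynomial

/-- Single-error Berlekamp–Welch with n = 4 parties: if r differs from the
codeword of P (deg P ≤ 1) exactly at position j ∈ {1,2,3,4}, then any solution
(a₀,a₁,a₂,b₀) of the linear system a₀ + a₁·i + a₂·i² = rᵢ(i + b₀), i = 1,…,4,
has b₀ = -j, i.e. the root of the error locator x + b₀ is the error position. -/
theorem single_error_locator (p : ℕ) [Fact p.Prime] (hp4 : 4 < p)
    (P : Polynomial (ZMod p)) (hP : P.degree ≤ 1)
    (r : Fin 4 → ZMod p) (j : Fin 4)
    (hne : r j ≠ P.eval (((j : ℕ) + 1 : ℕ) : ZMod p))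
    (hagree : ∀ i : Fin 4, i ≠ j → r i = P.eval (((i : ℕ) + 1 : ℕ) : ZMod p))
    (a₀ a₁ a₂ b₀ : ZMod p)
    (hsys : ∀ i : Fin 4,
      a₀ + a₁ * (((i : ℕ) + 1 : ℕ) : ZMod p) + a₂ * (((i : ℕ) + 1 : ℕ) : ZMod p) ^ 2
        = r i * ((((i : ℕ) + 1 : ℕ) : ZMod p) + b₀)) :
    b₀ = -(((j : ℕ) + 1 : ℕ) : ZMod p) := by
  have hPe : ∀ t : ZMod p, P.eval t = P.coeff 1 * t + P.coeff 0 := by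
    intro t
    conv_lhs => rw [Polynomial.eq_X_add_C_of_degree_le_one hP]
    simp
  have h3ne : (3 : ZMod p) ≠ 0 := by
    intro h
    have h' : ((3 : ℕ) : ZMod p) = 0 := by exact_mod_cast h
    have := (ZMod.natCast_eq_zero_iff 3 p).mp h'
    have := Nat.le_of_dvd (by norm_num) this
    omega
  have h0 := hsys 0
  have h1 := hsys 1
  have h2 := hsys 2
  have h3 := hsys 3
  fin_cases j
  · have e1 := hagree 1 (by decide)
    have e2 := hagree 2 (by decide)
    have e3 := hagree 3 (by decide)
    norm_num [hPe, show ((3 : Fin 4) : ℕ) = 3 from rfl] at h0 h1 h2 h3 e1 e2 e3 hne ⊢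
    rw [e1] at h1; rw [e2] at h2; rw [e3] at h3
    have key : (r 0 - (P.coeff 1 * 1 + P.coeff 0)) * (1 + b₀) = 0 := by
      linear_combination 3 * h1 - 3 * h2 + h3 - h0
    rcases mul_eq_zero.mp key with h | h
    · exact absurd (sub_eq_zero.mp h) (by simpa using hne)
    · linear_combination h
  · have e1 := hagree 0 (by decide)
    have e2 := hagree 2 (by decide)
    have e3 := hagree 3 (by decide)
    norm_num [hPe, show ((3 : Fin 4) : ℕ) = 3 from rfl] at h0 h1 h2 h3 e1 e2 e3 hne ⊢
    rw [e1] at h0; rw [e2] at h2; rw [e3] at h3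
    have key : (3 : ZMod p) * ((r 1 - (P.coeff 1 * 2 + P.coeff 0)) * (2 + b₀)) = 0 := by
      linear_combination h0 + 3 * h2 - h3 - 3 * h1
    rcases mul_eq_zero.mp key with h | h
    · exact absurd h h3ne
    rcases mul_eq_zero.mp h with h | h
    · exact absurd (sub_eq_zero.mp h) (by simpa using hne)
    · linear_combination h
  · have e1 := hagree 0 (by decide)
    have e2 := hagree 1 (by decide)
    have e3 := hagree 3 (by decide)
    norm_num [hPe, show ((3 : Fin 4) : ℕ) = 3 from rfl] at h0 h1 h2 h3 e1 e2 e3 hne ⊢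
    rw [e1] at h0; rw [e2] at h1; rw [e3] at h3
    have key : (3 : ZMod p) * ((r 2 - (P.coeff 1 * 3 + P.coeff 0)) * (3 + b₀)) = 0 := by
      linear_combination 3 * h1 + h3 - h0 - 3 * h2
    rcases mul_eq_zero.mp key with h | h
    · exact absurd h h3ne
    rcases mul_eq_zero.mp h with h | h
    · exact absurd (sub_eq_zero.mp h) (by simpa using hne)
    · linear_combination h
  · have e1 := hagree 0 (by decide)
    have e2 := hagree 1 (by decide)
    have e3 := hagree 2 (by decide)
    norm_num [hPe, show ((3 : Fin 4) : ℕ) = 3 from rfl] at h0 h1 h2 h3 e1 e2 e3 hne ⊢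
    rw [e1] at h0; rw [e2] at h1; rw [e3] at h2
    have key : (r 3 - (P.coeff 1 * 4 + P.coeff 0)) * (4 + b₀) = 0 := by
      linear_combination h0 - 3 * h1 + 3 * h2 - h3
    rcases mul_eq_zero.mp key with h | h
    · exact absurd (sub_eq_zero.mp h) (by simpa using hne)
    · linear_combination h
end

section
/- If r ∈ F^n agrees with the codeword of P (deg P < k) except in exactly the positions in a set S with |S| = e and n ≥ k + 2e, then for any Berlekamp-Welch solution (Q, E) with E monic of degree exactly e and Q, E satisfying the key equations and degree bounds, the roots of E among {x_1,...,x_n} are exactly {x_i : i ∈ S}. -/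
open Polynomial

/-- If r differs from the codeword of P exactly on a set S of size e and
n ≥ k + 2e, then for any Berlekamp–Welch solution (Q,E) with E monic of degree
exactly e and Q = P·E, the roots of E among the evaluation points are exactly
the error positions. -/
theorem error_locator_roots {F : Type*} [Field F] [DecidableEq F]
    (n k e : ℕ) (hn : k + 2 * e ≤ n) (x : Fin n ↪ F) (P : F[X])
    (hP : P.degree < (k : ℕ)) (r : Fin n → F)
    (hS : (Finset.univ.filter fun i : Fin n => r i ≠ P.eval (x i)).card = e)
    (Q E : F[X]) (hEm : E.Monic) (hEd : E.degree = (e : ℕ))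
    (hQd : Q.degree ≤ ((k + e - 1 : ℕ) : ℕ))
    (hkey : ∀ i : Fin n, Q.eval (x i) = r i * E.eval (x i))
    (hQE : Q = P * E) :
    ∀ i : Fin n, E.eval (x i) = 0 ↔ r i ≠ P.eval (x i) := by
  have hE0 : E ≠ 0 := hEm.ne_zero
  have hback : ∀ i : Fin n, r i ≠ P.eval (x i) → E.eval (x i) = 0 := by
    intro i hi
    have h := hkey i
    rw [hQE, eval_mul] at h
    have : (r i - P.eval (x i)) * E.eval (x i) = 0 := by linear_combination -h
    rcases mul_eq_zero.mp this with h' | h'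
    · exact absurd (sub_eq_zero.mp h') hi
    · exact h'
  intro i
  constructor
  · intro hEi
    by_contra hri
    -- build finset of roots of size e+1
    set S := Finset.univ.filter fun j : Fin n => r j ≠ P.eval (x j) with hSdef
    have hiS : i ∉ S := by simp [hSdef, hri]
    set T := (insert i S).image x with hTdef
    have hTcard : T.card = e + 1 := by
      rw [hTdef, Finset.card_image_of_injective _ x.injective,
        Finset.card_insert_of_notMem hiS, hS]
    have hsub : T ⊆ E.roots.toFinset := by
      intro y hy
      rw [hTdef, Finset.mem_image] at hy
      obtain ⟨j, hj, rfl⟩ := hy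
      rw [Multiset.mem_toFinset, mem_roots hE0, IsRoot.def]
      rcases Finset.mem_insert.mp hj with rfl | hj
      · exact hEi
      · exact hback j (by simpa [hSdef] using hj)
    have h1 : T.card ≤ E.roots.toFinset.card := Finset.card_le_card hsub
    have h2 : E.roots.toFinset.card ≤ Multiset.card E.roots :=
      Multiset.toFinset_card_le _
    have h3 : Multiset.card E.roots ≤ E.natDegree := E.card_roots' 
    have h4 : E.natDegree = e := natDegree_eq_of_degree_eq_some hEd
    omega
  · exact hback i
end
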